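/- Let X and Y be Polish spaces, P, Q ∈ P(X), f : X → Y a Borel map, and d : Y × Y → [0,∞] a Borel transportation cost on Y. Then the optimal transport discrepancy between P and Q with cost d ∘ (f × f) equals the optimal transport discrepancy between the pushforwards with cost d: W_{d∘(f×f)}(P,Q) = W_d(f_#P, f_#Q). -/

import Mathlib

/-! Pushing a coupling of `P` and `Q` forward by `f × f` gives a coupling of `f_#P` and `f_#Q`
of the same cost, which proves `≥`. Conversely, the conditional distributions `κ_P y`, `κ_Q y`
of `x` given `f x = y` live on the fibre `f⁻¹{y}` and recompose `P` and `Q`. Gluing a coupling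
`γ` of the pushforwards with `κ_P ∥ κ_Q` therefore yields a coupling of `P` and `Q` on which
`d (f x₁, f x₂) = d (y₁, y₂)` almost surely, so it has the same cost as `γ`. -/

open MeasureTheory
open scoped ENNReal

noncomputable section

/-- The set of couplings of two measures. -/
def couplings {X : Type*} [MeasurableSpace X] (P Q : Measure X) :
    Set (Measure (X × X)) :=
  {γ | IsProbabilityMeasure γ ∧ γ.map Prod.fst = P ∧ γ.map Prod.snd = Q}

/-- Optimal transport discrepancy with transportation cost `c`. -/
def OTCost {X : Type*} [MeasurableSpace X] (c : X × X → ℝ≥0∞) (P Q : Measure X) : ℝ≥0∞ :=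
  ⨅ γ ∈ couplings P Q, ∫⁻ x, c x ∂γ

open ProbabilityTheory Filter

lemma MeasureTheory.Measure.lintegral_comp_le {α β : Type*} [MeasurableSpace α]
    [MeasurableSpace β] (κ : Kernel α β) (μ : Measure α) (c : β → ℝ≥0∞) :
    ∫⁻ b, c b ∂(κ ∘ₘ μ) ≤ ∫⁻ a, ∫⁻ b, c b ∂κ a ∂μ := by
  obtain ⟨g, hg, hgc, hg_eq⟩ := exists_measurable_le_lintegral_eq (κ ∘ₘ μ) c
  rw [hg_eq, Measure.lintegral_bind κ.aemeasurable hg.aemeasurable]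
  exact lintegral_mono fun a => lintegral_mono hgc

section Couplings

variable {X Y : Type*} [MeasurableSpace X] [MeasurableSpace Y]

lemma map_prodMap_mem_couplings {P Q : Measure X} {γ : Measure (X × X)}
    (hγ : γ ∈ couplings P Q) {f : X → Y} (hf : Measurable f) :
    γ.map (Prod.map f f) ∈ couplings (P.map f) (Q.map f) := by
  obtain ⟨hγ_prob, rfl, rfl⟩ := hγ
  refine ⟨Measure.isProbabilityMeasure_map (hf.prodMap hf).aemeasurable, ?_, ?_⟩
  · rw [Measure.map_map measurable_fst (hf.prodMap hf), Measure.map_map hf measurable_fst]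
    rfl
  · rw [Measure.map_map measurable_snd (hf.prodMap hf), Measure.map_map hf measurable_snd]
    rfl

lemma comp_parallelComp_mem_couplings {μ ν : Measure Y} {γ : Measure (Y × Y)}
    (hγ : γ ∈ couplings μ ν) (κ η : Kernel Y X) [IsMarkovKernel κ] [IsMarkovKernel η] :
    (κ ∥ₖ η) ∘ₘ γ ∈ couplings (κ ∘ₘ μ) (η ∘ₘ ν) := by
  obtain ⟨hγ_prob, rfl, rfl⟩ := hγ
  refine ⟨inferInstance, ?_, ?_⟩
  · ext s hs
    rw [Measure.map_apply measurable_fst hs,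
      Measure.bind_apply (measurable_fst hs) (Kernel.aemeasurable _),
      Measure.bind_apply hs κ.aemeasurable, lintegral_map (κ.measurable_coe hs) measurable_fst]
    congr with p
    rw [Kernel.parallelComp_apply, ← Set.prod_univ, Measure.prod_prod, measure_univ, mul_one]
  · ext s hs
    rw [Measure.map_apply measurable_snd hs,
      Measure.bind_apply (measurable_snd hs) (Kernel.aemeasurable _),
      Measure.bind_apply hs η.aemeasurable, lintegral_map (η.measurable_coe hs) measurable_snd]
    congr with p
    rw [Kernel.parallelComp_apply, ← Set.univ_prod, Measure.prod_prod, measure_univ, one_mul]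

lemma otCost_map_le_otCost_comp {P Q : Measure X} {f : X → Y} (hf : Measurable f)
    (d : Y × Y → ℝ≥0∞) :
    OTCost d (P.map f) (Q.map f) ≤ OTCost (fun x => d (f x.1, f x.2)) P Q :=
  le_iInf₂ fun _ hγ => iInf₂_le_of_le _ (map_prodMap_mem_couplings hγ hf)
    (lintegral_map_le d (Prod.map f f))

lemma otCost_comp_le_of_ae_fiber {μ ν : Measure Y} (f : X → Y) (κ η : Kernel Y X)
    [IsMarkovKernel κ] [IsMarkovKernel η] (hκ : ∀ᵐ y ∂μ, ∀ᵐ x ∂κ y, f x = y)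
    (hη : ∀ᵐ y ∂ν, ∀ᵐ x ∂η y, f x = y) (d : Y × Y → ℝ≥0∞) :
    OTCost (fun x => d (f x.1, f x.2)) (κ ∘ₘ μ) (η ∘ₘ ν) ≤ OTCost d μ ν := by
  refine le_iInf₂ fun γ hγ => iInf₂_le_of_le _ (comp_parallelComp_mem_couplings hγ κ η) ?_
  obtain ⟨-, rfl, rfl⟩ := hγ
  refine (Measure.lintegral_comp_le _ _ _).trans_eq (lintegral_congr_ae ?_)
  filter_upwards [ae_of_ae_map measurable_fst.aemeasurable hκ,
    ae_of_ae_map measurable_snd.aemeasurable hη] with p hp₁ hp₂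
  have hfiber : ∀ᵐ x ∂(κ ∥ₖ η) p, (f x.1, f x.2) = p := by
    rw [Kernel.parallelComp_apply]
    filter_upwards [Measure.quasiMeasurePreserving_fst.ae hp₁,
      Measure.quasiMeasurePreserving_snd.ae hp₂] with x hx₁ hx₂
    rw [hx₁, hx₂]
  rw [lintegral_congr_ae (hfiber.mono fun x hx => congrArg d hx), lintegral_const,
    measure_univ, mul_one]

end Couplings

lemma ae_ae_condDistrib_fiber {X Y : Type*} [MeasurableSpace X] [StandardBorelSpace X]
    [Nonempty X] [MeasurableSpace Y] [MeasurableEq Y] (P : Measure X) [IsFiniteMeasure P]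
    {f : X → Y} (hf : Measurable f) :
    ∀ᵐ y ∂P.map f, ∀ᵐ x ∂condDistrib id f P y, f x = y := by
  have h_graph : ∀ᵐ p ∂P.map (fun x => (f x, id x)), f p.2 = p.1 :=
    (ae_map_iff (hf.prodMk measurable_id).aemeasurable
      (measurableSet_eq_fun (hf.comp measurable_snd) measurable_fst)).mpr (ae_of_all _ fun _ => rfl)
  rw [← compProd_map_condDistrib aemeasurable_id] at h_graph
  exact Measure.ae_ae_of_ae_compProd h_graph

theorem otCost_pushforward_general
    {X Y : Type*}
    [MeasurableSpace X] [TopologicalSpace X] [PolishSpace X] [BorelSpace X]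
    [MeasurableSpace Y] [TopologicalSpace Y] [PolishSpace Y] [BorelSpace Y]
    (P Q : Measure X) [IsProbabilityMeasure P] [IsProbabilityMeasure Q]
    (f : X → Y) (hf : Measurable f)
    (d : Y × Y → ℝ≥0∞) :
    OTCost (fun x => d (f x.1, f x.2)) P Q = OTCost d (P.map f) (Q.map f) := by
  have : Nonempty X := P.nonempty_of_neZero
  refine le_antisymm ?_ (otCost_map_le_otCost_comp hf d)
  have h_lift := otCost_comp_le_of_ae_fiber f _ _ (ae_ae_condDistrib_fiber P hf)
    (ae_ae_condDistrib_fiber Q hf) d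
  rwa [condDistrib_comp_map hf.aemeasurable aemeasurable_id,
    condDistrib_comp_map hf.aemeasurable aemeasurable_id, Measure.map_id, Measure.map_id] at h_lift

/-- The OT discrepancy with cost `d ∘ (f × f)` equals the OT discrepancy of the
pushforwards with cost `d`. -/
theorem otCost_pushforward
    {X Y : Type*}
    [MeasurableSpace X] [TopologicalSpace X] [PolishSpace X] [BorelSpace X]
    [MeasurableSpace Y] [TopologicalSpace Y] [PolishSpace Y] [BorelSpace Y]
    (P Q : Measure X) [IsProbabilityMeasure P] [IsProbabilityMeasure Q]
    (f : X → Y) (hf : Measurable f)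
    (d : Y × Y → ℝ≥0∞) (hd : Measurable d) :
    OTCost (fun x => d (f x.1, f x.2)) P Q = OTCost d (P.map f) (Q.map f) :=
  otCost_pushforward_general P Q f hf d
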